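/- For α, β > −1 and integers k, l ≥ 0 define b_{k,l}^{α,β} = ( ((α+β)/2 + 1)_{k+l} · ((α+β+3)/2)_{k+l} ) / ( (α+1)_k (β+1)_l k! l! ), where (x)_k is the Pochhammer symbol. Then all b_{k,l}^{α,β} are strictly positive; for every γ > max{α, β} one has sup_{k,l ≥ 0} b_{k,l}^{α,β} / b_{k,l}^{γ,γ} < ∞; and for every η with −1 < η < min{α, β} one has inf_{k,l ≥ 0} b_{k,l}^{α,β} / b_{k,l}^{η,η} > 0. -/

import Mathlib

/-!
By Euler's limit formula `Γ(s) = lim n^s n! / (s)_{n+1}`, the ratio `(y)_n / (x)_n` of two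
Pochhammer symbols with `x, y > 0` tends to `Γ(x) / Γ(y)` after division by `(n + 1)^(y - x)`,
so it lies between two positive multiples of `(n + 1)^(y - x)` for all `n`. The quotient
`b_{k,l}^{a,b} / b_{k,l}^{c,d}` is a product of four such ratios, hence at most a constant times
`(k + 1)^(c - a) (l + 1)^(d - b) / (k + l + 1)^(c + d - a - b)`, which is at most `1` when
`a ≤ c` and `b ≤ d`. The lower bound is the upper bound for `(η, η) ≤ (α, β)`, inverted.
-/

/-- `b_{k,l}^{α,β} = ((α+β)/2+1)_{k+l} ((α+β+3)/2)_{k+l} / ((α+1)_k (β+1)_l k! l!)`,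
where `(x)_k` is the Pochhammer symbol. -/
noncomputable def bCoef (α β : ℝ) (k l : ℕ) : ℝ :=
  ((ascPochhammer ℝ (k + l)).eval ((α + β) / 2 + 1) *
    (ascPochhammer ℝ (k + l)).eval ((α + β + 3) / 2)) /
    ((ascPochhammer ℝ k).eval (α + 1) * (ascPochhammer ℝ l).eval (β + 1) *
      k.factorial * l.factorial)

open Finset Filter Topology

theorem ascPochhammer_eval_eq_prod_range {S : Type*} [CommSemiring S] (x : S) (n : ℕ) :
    (ascPochhammer S n).eval x = ∏ j ∈ range n, (x + j) := by
  induction n with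
  | zero => simp
  | succ n ih => rw [ascPochhammer_succ_eval, ih, prod_range_succ]

noncomputable def pochhammerRatio (x y : ℝ) (n : ℕ) : ℝ :=
  (ascPochhammer ℝ n).eval y / (ascPochhammer ℝ n).eval x

theorem pochhammerRatio_pos {x y : ℝ} (hx : 0 < x) (hy : 0 < y) (n : ℕ) :
    0 < pochhammerRatio x y n :=
  div_pos (ascPochhammer_pos n y hy) (ascPochhammer_pos n x hx)

theorem Real.GammaSeq_div_GammaSeq (x y : ℝ) {n : ℕ} (hn : n ≠ 0) :
    Real.GammaSeq x n / Real.GammaSeq y n = (n : ℝ) ^ (x - y) * pochhammerRatio x y (n + 1) := by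
  have hn' : (0 : ℝ) < n := by positivity
  simp only [Real.GammaSeq, pochhammerRatio, ← ascPochhammer_eval_eq_prod_range,
    Real.rpow_sub hn']
  have := n.factorial_pos
  field_simp

theorem tendsto_pochhammerRatio_div_rpow (x : ℝ) {y : ℝ} (hy : 0 < y) :
    Tendsto (fun n : ℕ => pochhammerRatio x y n / ((n : ℝ) + 1) ^ (y - x))
      atTop (𝓝 (Real.Gamma x / Real.Gamma y)) := by
  rw [← tendsto_add_atTop_iff_nat 1]
  have h := ((tendsto_natCast_div_add_atTop (2 : ℝ)).rpow_const (p := y - x)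
    (Or.inl one_ne_zero)).mul ((Real.GammaSeq_tendsto_Gamma x).div
      (Real.GammaSeq_tendsto_Gamma y) (Real.Gamma_pos_of_pos hy).ne')
  rw [Real.one_rpow, one_mul] at h
  refine h.congr' ((eventually_ne_atTop 0).mono fun n hn => ?_)
  have hn' : (0 : ℝ) < n := by positivity
  simp only [Pi.div_apply, Real.GammaSeq_div_GammaSeq x y hn]
  rw [← mul_assoc, Real.div_rpow hn'.le (by positivity), div_mul_eq_mul_div, ← Real.rpow_add hn',
    sub_add_sub_cancel', sub_self, Real.rpow_zero]
  push_cast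
  ring_nf

theorem exists_inv_le_and_le_of_tendsto {u : ℕ → ℝ} {L : ℝ} (hu : ∀ n, 0 < u n) (hL : 0 < L)
    (h : Tendsto u atTop (𝓝 L)) : ∃ C, 0 < C ∧ ∀ n, C⁻¹ ≤ u n ∧ u n ≤ C := by
  obtain ⟨A, hA⟩ := h.bddAbove_range
  obtain ⟨B, hB⟩ := (h.inv₀ hL.ne').bddAbove_range
  have hle (n : ℕ) : u n ≤ max A B := (hA ⟨n, rfl⟩).trans (le_max_left A B)
  have hinv_le (n : ℕ) : (u n)⁻¹ ≤ max A B := (hB ⟨n, rfl⟩).trans (le_max_right A B)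
  exact ⟨max A B, (hu 0).trans_le (hle 0),
    fun n => ⟨(inv_le_comm₀ ((hu n).trans_le (hle n)) (hu n)).2 (hinv_le n), hle n⟩⟩

theorem exists_pochhammerRatio_le_and_le {x y : ℝ} (hx : 0 < x) (hy : 0 < y) :
    ∃ C, 0 < C ∧ ∀ n : ℕ, pochhammerRatio x y n ≤ C * ((n : ℝ) + 1) ^ (y - x) ∧
      ((n : ℝ) + 1) ^ (y - x) ≤ C * pochhammerRatio x y n := by
  obtain ⟨C, hC, hbound⟩ := exists_inv_le_and_le_of_tendsto
    (fun n => div_pos (pochhammerRatio_pos hx hy n) (by positivity))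
    (div_pos (Real.Gamma_pos_of_pos hx) (Real.Gamma_pos_of_pos hy))
    (tendsto_pochhammerRatio_div_rpow x hy)
  have hR (n : ℕ) : (0 : ℝ) < ((n : ℝ) + 1) ^ (y - x) := by positivity
  exact ⟨C, hC, fun n => ⟨(div_le_iff₀ (hR n)).1 (hbound n).2,
    (inv_mul_le_iff₀ hC).1 ((le_div_iff₀ (hR n)).1 (hbound n).1)⟩⟩

theorem bCoef_pos {α β : ℝ} (hα : -1 < α) (hβ : -1 < β) (k l : ℕ) : 0 < bCoef α β k l := by
  unfold bCoef
  have := ascPochhammer_pos k (α + 1) (by linarith)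
  have := ascPochhammer_pos l (β + 1) (by linarith)
  have := ascPochhammer_pos (k + l) ((α + β) / 2 + 1) (by linarith)
  have := ascPochhammer_pos (k + l) ((α + β + 3) / 2) (by linarith)
  positivity

theorem bCoef_div_bCoef (a b c d : ℝ) (k l : ℕ) :
    bCoef a b k l / bCoef c d k l =
      pochhammerRatio (a + 1) (c + 1) k * pochhammerRatio (b + 1) (d + 1) l /
        (pochhammerRatio ((a + b) / 2 + 1) ((c + d) / 2 + 1) (k + l) *
          pochhammerRatio ((a + b + 3) / 2) ((c + d + 3) / 2) (k + l)) := by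
  have hsplit (x y : ℝ) : bCoef x y k l =
      (ascPochhammer ℝ (k + l)).eval ((x + y) / 2 + 1) *
        (ascPochhammer ℝ (k + l)).eval ((x + y + 3) / 2) /
        ((ascPochhammer ℝ k).eval (x + 1) * (ascPochhammer ℝ l).eval (y + 1)) /
        (k.factorial * l.factorial) := by
    rw [bCoef, mul_assoc _ (k.factorial : ℝ), div_div]
  rw [hsplit, hsplit, div_div_div_cancel_right₀ (by positivity)]
  simp only [pochhammerRatio, div_eq_mul_inv, mul_inv, inv_inv]
  ring

theorem exists_bCoef_div_bCoef_le {a b c d : ℝ} (ha : -1 < a) (hb : -1 < b) (hac : a ≤ c)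
    (hbd : b ≤ d) : ∃ C, 0 < C ∧ ∀ k l : ℕ, bCoef a b k l / bCoef c d k l ≤ C := by
  obtain ⟨C₁, hC₁, h₁⟩ := exists_pochhammerRatio_le_and_le (x := a + 1) (y := c + 1)
    (by linarith) (by linarith)
  obtain ⟨C₂, hC₂, h₂⟩ := exists_pochhammerRatio_le_and_le (x := b + 1) (y := d + 1)
    (by linarith) (by linarith)
  obtain ⟨C₃, hC₃, h₃⟩ := exists_pochhammerRatio_le_and_le (x := (a + b) / 2 + 1)
    (y := (c + d) / 2 + 1) (by linarith) (by linarith)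
  obtain ⟨C₄, hC₄, h₄⟩ := exists_pochhammerRatio_le_and_le (x := (a + b + 3) / 2)
    (y := (c + d + 3) / 2) (by linarith) (by linarith)
  refine ⟨C₁ * C₂ * (C₃ * C₄), by positivity, fun k l => ?_⟩
  set N : ℝ := k + l + 1
  have hN : 0 < N := by positivity
  have hkl : ((k + l : ℕ) : ℝ) + 1 = N := by push_cast; rfl
  have hexp : (c + 1 - (a + 1)) + (d + 1 - (b + 1)) =
      ((c + d) / 2 + 1 - ((a + b) / 2 + 1)) + ((c + d + 3) / 2 - (a + b + 3) / 2) := by ring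
  rw [bCoef_div_bCoef, div_le_iff₀ (mul_pos (pochhammerRatio_pos (by linarith) (by linarith) _)
    (pochhammerRatio_pos (by linarith) (by linarith) _))]
  calc pochhammerRatio (a + 1) (c + 1) k * pochhammerRatio (b + 1) (d + 1) l
      ≤ (C₁ * ((k : ℝ) + 1) ^ (c + 1 - (a + 1))) * (C₂ * ((l : ℝ) + 1) ^ (d + 1 - (b + 1))) :=
        mul_le_mul (h₁ k).1 (h₂ l).1 (pochhammerRatio_pos (by linarith) (by linarith) _).le
          (by positivity)
    _ ≤ (C₁ * N ^ (c + 1 - (a + 1))) * (C₂ * N ^ (d + 1 - (b + 1))) := by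
        gcongr <;> linarith [k.cast_nonneg (α := ℝ), l.cast_nonneg (α := ℝ)]
    _ = C₁ * C₂ * (N ^ ((c + d) / 2 + 1 - ((a + b) / 2 + 1)) *
          N ^ ((c + d + 3) / 2 - (a + b + 3) / 2)) := by
        rw [← Real.rpow_add hN, ← hexp, Real.rpow_add hN]; ring
    _ ≤ C₁ * C₂ * ((C₃ * pochhammerRatio ((a + b) / 2 + 1) ((c + d) / 2 + 1) (k + l)) *
          (C₄ * pochhammerRatio ((a + b + 3) / 2) ((c + d + 3) / 2) (k + l))) := by
        have h₃' := (h₃ (k + l)).2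
        have h₄' := (h₄ (k + l)).2
        rw [hkl] at h₃' h₄'
        gcongr
        exact (Real.rpow_nonneg hN.le _).trans h₃'
    _ = _ := by ring

theorem bCoef_pos_ratio_bounded (α β : ℝ) (hα : -1 < α) (hβ : -1 < β) :
    (∀ k l : ℕ, 0 < bCoef α β k l) ∧
    (∀ γ : ℝ, max α β < γ →
      BddAbove (Set.range fun p : ℕ × ℕ => bCoef α β p.1 p.2 / bCoef γ γ p.1 p.2)) ∧
    ∀ η : ℝ, -1 < η → η < min α β →
      ∃ c : ℝ, 0 < c ∧ ∀ k l : ℕ, c ≤ bCoef α β k l / bCoef η η k l := by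
  refine ⟨bCoef_pos hα hβ, fun γ hγ => ?_, fun η hη hηαβ => ?_⟩
  · obtain ⟨C, -, hC⟩ := exists_bCoef_div_bCoef_le hα hβ (le_of_max_le_left hγ.le)
      (le_of_max_le_right hγ.le)
    exact ⟨C, Set.forall_mem_range.2 fun p => hC p.1 p.2⟩
  · obtain ⟨C, hC₀, hC⟩ := exists_bCoef_div_bCoef_le hη hη (le_min_iff.1 hηαβ.le).1
      (le_min_iff.1 hηαβ.le).2
    refine ⟨C⁻¹, inv_pos.2 hC₀, fun k l => ?_⟩
    rw [← inv_div]
    exact inv_anti₀ (div_pos (bCoef_pos hη hη k l) (bCoef_pos hα hβ k l)) (hC k l)
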